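/- arXiv:2605.13810 — 3 statements merged into one kernel-verified Lean document; each statement's English description precedes it below -/
import Mathlib

section
/- For every unit vector a in R^d, E[exp(X_a²/3)] ≤ √3, where X_a is the Rademacher sum with coefficients a. -/
/-!
Gaussian linearization: `exp (λ x²) = 𝔼 exp (√(2λ) x G)` for a standard Gaussian `G`, so by
Tonelli `𝔼 exp (λ X²) = 𝔼_G mgf_X (√(2λ) G) ≤ 𝔼_G exp (λ c G²) = (1 - 2λc)^(-1/2)` whenever `X`
is `c`-sub-Gaussian. By Hoeffding's lemma and independence, a Rademacher sum whose coefficients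
form a unit vector is `1`-sub-Gaussian; take `λ = 1/3`.
-/

open MeasureTheory ProbabilityTheory Real
open scoped ENNReal NNReal

lemma lintegral_exp_neg_mul_sq {b : ℝ} (hb : 0 < b) :
    ∫⁻ t : ℝ, ENNReal.ofReal (exp (-b * t ^ 2)) = ENNReal.ofReal √(π / b) := by
  rw [← ofReal_integral_eq_lintegral_ofReal (integrable_exp_neg_mul_sq hb)
    (ae_of_all _ fun _ ↦ (exp_pos _).le), integral_gaussian]

lemma lintegral_exp_mul_sub_sq_half (s : ℝ) :
    ∫⁻ t : ℝ, ENNReal.ofReal (exp (s * t - t ^ 2 / 2))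
      = ENNReal.ofReal (√(2 * π) * exp (s ^ 2 / 2)) := by
  have hshift : ∀ t, exp (s * t - t ^ 2 / 2) = exp (s ^ 2 / 2) * exp (-(1 / 2) * (t - s) ^ 2) := by
    intro t
    rw [← exp_add]
    ring_nf
  simp_rw [hshift, ENNReal.ofReal_mul (exp_pos _).le]
  rw [lintegral_const_mul' _ _ ENNReal.ofReal_ne_top,
    lintegral_sub_right_eq_self (fun t ↦ ENNReal.ofReal (exp (-(1 / 2) * t ^ 2))) s,
    lintegral_exp_neg_mul_sq (by norm_num), mul_comm]
  norm_num
  ring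

namespace ProbabilityTheory.HasSubgaussianMGF

variable {Ω : Type*} {mΩ : MeasurableSpace Ω} {μ : Measure Ω} {X : Ω → ℝ} {c : ℝ≥0}

lemma lintegral_exp_mul_sub_le (h : HasSubgaussianMGF X c μ) (u b : ℝ) :
    ∫⁻ ω, ENNReal.ofReal (exp (u * X ω - b)) ∂μ ≤ ENNReal.ofReal (exp (c * u ^ 2 / 2 - b)) := by
  simp_rw [sub_eq_add_neg _ b, exp_add, ENNReal.ofReal_mul (exp_pos _).le]
  rw [lintegral_mul_const' _ _ ENNReal.ofReal_ne_top, ← ofReal_integral_eq_lintegral_ofReal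
    (h.integrable_exp_mul u) (ae_of_all _ fun _ ↦ (exp_pos _).le)]
  gcongr
  exact h.mgf_le u

lemma lintegral_exp_mul_sq_le (h : HasSubgaussianMGF X c μ) {l : ℝ}
    (hl : 0 ≤ l) (hlc : 2 * l * c < 1) :
    ∫⁻ ω, ENNReal.ofReal (exp (l * X ω ^ 2)) ∂μ ≤ ENNReal.ofReal (√(1 - 2 * l * c))⁻¹ := by
  have : IsFiniteMeasure μ :=
    (integrable_const_iff.mp (by simpa using h.integrable_exp_mul 0)).resolve_left one_ne_zero
  set s := √(2 * l)
  have hs : s ^ 2 = 2 * l := sq_sqrt (by positivity)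
  have hlin : ∀ x : ℝ, ENNReal.ofReal (exp (l * x ^ 2))
      = ENNReal.ofReal (√(2 * π))⁻¹ * ∫⁻ t : ℝ, ENNReal.ofReal (exp (s * x * t - t ^ 2 / 2)) := by
    intro x
    rw [lintegral_exp_mul_sub_sq_half, ← ENNReal.ofReal_mul (by positivity), ← mul_assoc,
      inv_mul_cancel₀ (by positivity), one_mul, mul_pow, hs]
    ring_nf
  have hinner : ∀ t : ℝ, ∫⁻ ω, ENNReal.ofReal (exp (s * X ω * t - t ^ 2 / 2)) ∂μ
      ≤ ENNReal.ofReal (exp (-((1 - 2 * l * c) / 2) * t ^ 2)) := by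
    intro t
    calc _ = ∫⁻ ω, ENNReal.ofReal (exp ((s * t) * X ω - t ^ 2 / 2)) ∂μ := by
          simp only [mul_right_comm s]
      _ ≤ ENNReal.ofReal (exp (c * (s * t) ^ 2 / 2 - t ^ 2 / 2)) := h.lintegral_exp_mul_sub_le _ _
      _ = _ := by rw [mul_pow, hs]; ring_nf
  have hmeas : AEMeasurable
      (Function.uncurry fun ω t ↦ ENNReal.ofReal (exp (s * X ω * t - t ^ 2 / 2)))
      (μ.prod (volume : Measure ℝ)) := by
    have hX : AEMeasurable (fun p : Ω × ℝ ↦ X p.1) (μ.prod volume) :=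
      h.aemeasurable.comp_quasiMeasurePreserving Measure.quasiMeasurePreserving_fst
    exact (((hX.const_mul s).mul measurable_snd.aemeasurable).sub
      ((measurable_snd.pow_const 2).div_const 2).aemeasurable).exp.ennreal_ofReal
  have hpos : 0 < 1 - 2 * l * c := by linarith
  calc ∫⁻ ω, ENNReal.ofReal (exp (l * X ω ^ 2)) ∂μ
      = ENNReal.ofReal (√(2 * π))⁻¹
          * ∫⁻ t : ℝ, ∫⁻ ω, ENNReal.ofReal (exp (s * X ω * t - t ^ 2 / 2)) ∂μ := by
        simp_rw [hlin]
        rw [lintegral_const_mul' _ _ ENNReal.ofReal_ne_top, lintegral_lintegral_swap hmeas]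
    _ ≤ ENNReal.ofReal (√(2 * π))⁻¹
          * ∫⁻ t : ℝ, ENNReal.ofReal (exp (-((1 - 2 * l * c) / 2) * t ^ 2)) := by
        gcongr with t
        exact hinner t
    _ = ENNReal.ofReal (√(1 - 2 * l * c))⁻¹ := by
        rw [lintegral_exp_neg_mul_sq (by positivity), ← ENNReal.ofReal_mul (by positivity)]
        congr 1
        rw [div_div_eq_mul_div, sqrt_div' _ hpos.le, mul_comm π, ← mul_div_assoc,
          inv_mul_cancel₀ (by positivity), one_div]

lemma integral_exp_mul_sq_le (h : HasSubgaussianMGF X c μ) {l : ℝ} (hl : 0 ≤ l)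
    (hlc : 2 * l * c < 1) : ∫ ω, exp (l * X ω ^ 2) ∂μ ≤ (√(1 - 2 * l * c))⁻¹ := by
  rw [integral_eq_lintegral_of_nonneg_ae (ae_of_all _ fun _ ↦ (exp_pos _).le)
    ((h.aemeasurable.pow_const 2).const_mul l).exp.aestronglyMeasurable]
  exact ENNReal.toReal_le_of_le_ofReal (by positivity) (h.lintegral_exp_mul_sq_le hl hlc)

end ProbabilityTheory.HasSubgaussianMGF

section Rademacher

variable {Ω : Type*} {mΩ : MeasurableSpace Ω} {μ : Measure Ω} [IsProbabilityMeasure μ]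
  {e : Ω → ℝ}

lemma ae_eq_one_or_eq_neg_one_of_rademacher (he : Measurable e) (h₁ : μ {ω | e ω = 1} = 1 / 2)
    (h₂ : μ {ω | e ω = -1} = 1 / 2) : ∀ᵐ ω ∂μ, e ω = 1 ∨ e ω = -1 := by
  have hdisj : Disjoint {ω | e ω = 1} {ω | e ω = -1} :=
    Set.disjoint_left.mpr fun ω (h₁ : e ω = 1) (h₂ : e ω = -1) ↦ by norm_num [h₁] at h₂
  have hlevel : ∀ x, MeasurableSet {ω | e ω = x} := fun x ↦ he (measurableSet_singleton x)
  refine mem_ae_iff.mpr ((prob_compl_eq_zero_iff ((hlevel 1).union (hlevel (-1)))).mpr ?_)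
  rw [measure_union hdisj (hlevel (-1)), h₁, h₂, ENNReal.add_halves]

lemma integral_comp_rademacher (he : Measurable e) (h₁ : μ {ω | e ω = 1} = 1 / 2)
    (h₂ : μ {ω | e ω = -1} = 1 / 2) (f : ℝ → ℝ) :
    ∫ ω, f (e ω) ∂μ = (f 1 + f (-1)) / 2 := by
  have hlevel : ∀ x, MeasurableSet {ω | e ω = x} := fun x ↦ he (measurableSet_singleton x)
  have hdisj : Disjoint {ω | e ω = 1} {ω | e ω = -1} :=
    Set.disjoint_left.mpr fun ω (h₁ : e ω = 1) (h₂ : e ω = -1) ↦ by norm_num [h₁] at h₂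
  have hint : ∀ x, IntegrableOn (fun ω ↦ f (e ω)) {ω | e ω = x} μ := fun x ↦
    (integrableOn_const (C := f x)).congr_fun (fun ω (hω : e ω = x) ↦ by rw [hω]) (hlevel x)
  have hconst : ∀ x, ∫ ω in {ω | e ω = x}, f (e ω) ∂μ = μ.real {ω | e ω = x} * f x := by
    intro x
    rw [setIntegral_congr_fun (hlevel x) (g := fun _ ↦ f x) fun ω (hω : e ω = x) ↦ by rw [hω],
      setIntegral_const, smul_eq_mul]
  calc ∫ ω, f (e ω) ∂μ = ∫ ω in {ω | e ω = 1} ∪ {ω | e ω = -1}, f (e ω) ∂μ := by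
        rw [Measure.restrict_eq_self_of_ae_mem (s := {ω | e ω = 1} ∪ {ω | e ω = -1})
          (ae_eq_one_or_eq_neg_one_of_rademacher he h₁ h₂)]
    _ = (f 1 + f (-1)) / 2 := by
        rw [setIntegral_union hdisj (hlevel (-1)) (hint 1) (hint (-1)), hconst, hconst,
          measureReal_def, measureReal_def, h₁, h₂]
        norm_num
        ring

lemma hasSubgaussianMGF_const_mul_rademacher (he : Measurable e)
    (h₁ : μ {ω | e ω = 1} = 1 / 2) (h₂ : μ {ω | e ω = -1} = 1 / 2) (r : ℝ) :
    HasSubgaussianMGF (fun ω ↦ r * e ω) (‖r‖₊ ^ 2) μ := by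
  have hbound : ∀ᵐ ω ∂μ, r * e ω ∈ Set.Icc (-|r|) |r| := by
    filter_upwards [ae_eq_one_or_eq_neg_one_of_rademacher he h₁ h₂] with ω hω
    rcases hω with hω | hω <;> simp [hω, neg_abs_le, neg_le_abs, le_abs_self]
  have hmean : ∫ ω, r * e ω ∂μ = 0 := by
    rw [integral_comp_rademacher he h₁ h₂ (r * ·)]
    ring
  convert hasSubgaussianMGF_of_mem_Icc_of_integral_eq_zero (he.const_mul r).aemeasurable
    hbound hmean using 1
  ext
  simp [abs_of_nonneg (by positivity : 0 ≤ |r| + |r|)]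

end Rademacher

theorem rademacher_exp_sq_third_bound
    {Ω : Type*} [MeasureSpace Ω] [IsProbabilityMeasure (ℙ : Measure Ω)]
    {d : ℕ} (a : Fin d → ℝ) (ha : ∑ i, a i ^ 2 = 1)
    (ε : Fin d → Ω → ℝ) (hmeas : ∀ i, Measurable (ε i))
    (hind : iIndepFun ε ℙ)
    (hp : ∀ i, ℙ {ω | ε i ω = 1} = 1/2 ∧ ℙ {ω | ε i ω = -1} = 1/2) :
    ∫ ω, Real.exp ((∑ i, a i * ε i ω) ^ 2 / 3) ∂ℙ ≤ Real.sqrt 3 := by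
  have hvar : ∑ i, ‖a i‖₊ ^ 2 = 1 := by
    rw [← NNReal.coe_inj]
    simp [sq_abs, ha]
  have hsubG : HasSubgaussianMGF (fun ω ↦ ∑ i, a i * ε i ω) 1 ℙ :=
    hvar ▸ HasSubgaussianMGF.sum_of_iIndepFun (s := Finset.univ)
      (hind.comp (fun i x ↦ a i * x) fun i ↦ measurable_const_mul (a i))
      fun i _ ↦ hasSubgaussianMGF_const_mul_rademacher (hmeas i) (hp i).1 (hp i).2 (a i)
  calc ∫ ω, exp ((∑ i, a i * ε i ω) ^ 2 / 3) ∂ℙ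
      = ∫ ω, exp (1 / 3 * (∑ i, a i * ε i ω) ^ 2) ∂ℙ := by ring_nf
    _ ≤ (√(1 - 2 * (1 / 3) * (1 : ℝ≥0)))⁻¹ :=
        hsubG.integral_exp_mul_sq_le (by norm_num) (by norm_num)
    _ = √3 := by norm_num
end

section
/- If Z is a 1-subgaussian random variable (meaning E[exp(λZ)] ≤ exp(λ²/2) for all real λ) and ξ is a standard Gaussian, then for every α with 0 < α < 1/2, E[exp(α Z²)] ≤ E[exp(α ξ²)] = (1-2α)^{-1/2}. -/
open MeasureTheory ProbabilityTheory Real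
open scoped ENNReal NNReal

lemma gauss_lin_integrable {b : ℝ} (hb : 0 < b) (c : ℝ) :
    Integrable (fun x : ℝ => Real.exp (-b * x ^ 2 + c * x)) := by
  have hrw : (fun x : ℝ => Real.exp (-b * x ^ 2 + c * x)) =
      fun x => Real.exp (c ^ 2 / (4 * b)) * Real.exp (-b * (x - c / (2 * b)) ^ 2) := by
    funext x
    rw [← Real.exp_add]
    congr 1
    field_simp
    ring
  rw [hrw]
  exact ((integrable_exp_neg_mul_sq hb).comp_sub_right (c / (2 * b))).const_mul _

lemma gauss_lin_integral {b : ℝ} (hb : 0 < b) (c : ℝ) :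
    ∫ x : ℝ, Real.exp (-b * x ^ 2 + c * x) =
      Real.sqrt (π / b) * Real.exp (c ^ 2 / (4 * b)) := by
  have hrw : ∀ x : ℝ, Real.exp (-b * x ^ 2 + c * x) =
      Real.exp (c ^ 2 / (4 * b)) * Real.exp (-b * (x - c / (2 * b)) ^ 2) := by
    intro x
    rw [← Real.exp_add]
    congr 1
    field_simp
    ring
  simp_rw [hrw]
  rw [integral_const_mul, integral_sub_right_eq_self (fun x => Real.exp (-b * x ^ 2)) (c / (2 * b)),
    integral_gaussian]
  ring

lemma gauss_integral_eq (g : ℝ → ℝ) :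
    ∫ x, g x ∂(gaussianReal 0 1) = ∫ x, gaussianPDFReal 0 1 x * g x := by
  rw [gaussianReal_of_var_ne_zero 0 one_ne_zero]
  have hm : Measurable fun x => (gaussianPDFReal 0 1 x).toNNReal :=
    measurable_real_toNNReal.comp (measurable_gaussianPDFReal 0 1)
  have hpdf : (gaussianPDF 0 1) = fun x => ((gaussianPDFReal 0 1 x).toNNReal : ℝ≥0∞) := rfl
  rw [hpdf, integral_withDensity_eq_integral_smul hm]
  congr 1
  funext x
  simp [NNReal.smul_def, Real.coe_toNNReal _ (gaussianPDFReal_nonneg 0 1 x)]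

lemma gauss_integrable_iff (g : ℝ → ℝ) :
    Integrable g (gaussianReal 0 1) ↔
      Integrable (fun x => gaussianPDFReal 0 1 x * g x) volume := by
  rw [gaussianReal_of_var_ne_zero 0 one_ne_zero]
  have hm : Measurable fun x => (gaussianPDFReal 0 1 x).toNNReal :=
    measurable_real_toNNReal.comp (measurable_gaussianPDFReal 0 1)
  have hpdf : (gaussianPDF 0 1) = fun x => ((gaussianPDFReal 0 1 x).toNNReal : ℝ≥0∞) := rfl
  rw [hpdf, integrable_withDensity_iff_integrable_smul (g := g) hm]
  have heq : (fun x => (gaussianPDFReal 0 1 x).toNNReal • g x) =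
      fun x => gaussianPDFReal 0 1 x * g x := by
    funext x
    simp [NNReal.smul_def, Real.coe_toNNReal _ (gaussianPDFReal_nonneg 0 1 x)]
  rw [heq]

lemma pdf_mul_exp_lin (r : ℝ) :
    (fun x => gaussianPDFReal 0 1 x * Real.exp (r * x)) =
      fun x => (Real.sqrt (2 * π))⁻¹ * Real.exp (-(1/2 : ℝ) * x ^ 2 + r * x) := by
  funext x
  simp only [gaussianPDFReal, NNReal.coe_one, mul_one, sub_zero]
  rw [mul_assoc, ← Real.exp_add]
  congr 2
  ring

lemma pdf_mul_exp_sq (a : ℝ) :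
    (fun x => gaussianPDFReal 0 1 x * Real.exp (a * x ^ 2)) =
      fun x => (Real.sqrt (2 * π))⁻¹ * Real.exp (-(1/2 - a) * x ^ 2 + 0 * x) := by
  funext x
  simp only [gaussianPDFReal, NNReal.coe_one, mul_one, sub_zero]
  rw [mul_assoc, ← Real.exp_add]
  congr 2
  ring

lemma gauss_mgf_integrable (r : ℝ) :
    Integrable (fun t => Real.exp (r * t)) (gaussianReal 0 1) := by
  rw [gauss_integrable_iff, pdf_mul_exp_lin r]
  exact (gauss_lin_integrable (show (0:ℝ) < 1/2 by norm_num) r).const_mul _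

lemma sqrt_two_pi_ne : Real.sqrt (2 * π) ≠ 0 := by
  refine (Real.sqrt_ne_zero ?_).2 (by positivity)
  positivity

lemma gauss_mgf (r : ℝ) :
    ∫ t, Real.exp (r * t) ∂(gaussianReal 0 1) = Real.exp (r ^ 2 / 2) := by
  rw [gauss_integral_eq, pdf_mul_exp_lin r, integral_const_mul,
    gauss_lin_integral (show (0:ℝ) < 1/2 by norm_num) r]
  rw [show π / (1/2 : ℝ) = 2 * π by ring, show r ^ 2 / (4 * (1/2 : ℝ)) = r ^ 2 / 2 by ring,
    ← mul_assoc, inv_mul_cancel₀ sqrt_two_pi_ne, one_mul]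

lemma gauss_sq_integrable {a : ℝ} (ha : a < 1/2) :
    Integrable (fun x => Real.exp (a * x ^ 2)) (gaussianReal 0 1) := by
  rw [gauss_integrable_iff, pdf_mul_exp_sq a]
  exact (gauss_lin_integrable (by linarith : (0:ℝ) < 1/2 - a) 0).const_mul _

lemma gauss_sq_integral {a : ℝ} (ha : a < 1/2) :
    ∫ x, Real.exp (a * x ^ 2) ∂(gaussianReal 0 1) = (1 - 2 * a) ^ (-(1:ℝ)/2) := by
  have h1 : (0:ℝ) < 1 - 2 * a := by linarith
  rw [gauss_integral_eq, pdf_mul_exp_sq a, integral_const_mul,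
    gauss_lin_integral (by linarith : (0:ℝ) < 1/2 - a) 0]
  rw [show (0:ℝ) ^ 2 / (4 * (1/2 - a)) = 0 by simp, Real.exp_zero, mul_one]
  rw [show π / (1/2 - a) = 2 * π / (1 - 2*a) by field_simp]
  rw [Real.sqrt_div (by positivity : (0:ℝ) ≤ 2 * π) (1 - 2*a)]
  rw [show (-(1:ℝ)/2) = -(1/2) by norm_num, Real.rpow_neg h1.le, ← Real.sqrt_eq_rpow]
  field_simp

/-- If `Z` is 1-subgaussian and `ξ` is standard Gaussian, then for `0 < α < 1/2`,
`E[exp (α Z²)] ≤ E[exp (α ξ²)] = (1 - 2α)^{-1/2}`. -/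
theorem subgaussian_exp_sq_le_gaussian
    {Ω : Type*} [MeasureSpace Ω] [IsProbabilityMeasure (ℙ : Measure Ω)]
    (Z ξ : Ω → ℝ) (hZ : Measurable Z) (hξ : Measurable ξ)
    (hsub : ∀ lam : ℝ, ∫ ω, Real.exp (lam * Z ω) ∂ℙ ≤ Real.exp (lam ^ 2 / 2))
    (hgauss : Measure.map ξ ℙ = gaussianReal 0 1)
    (α : ℝ) (hα0 : 0 < α) (hα : α < 1/2) :
    (∫ ω, Real.exp (α * Z ω ^ 2) ∂ℙ ≤ ∫ ω, Real.exp (α * ξ ω ^ 2) ∂ℙ) ∧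
    ∫ ω, Real.exp (α * ξ ω ^ 2) ∂ℙ = (1 - 2 * α) ^ (-(1:ℝ)/2) := by
  have h1 : (0:ℝ) < 1 - 2 * α := by linarith
  have hξint : ∫ ω, Real.exp (α * ξ ω ^ 2) ∂ℙ = (1 - 2 * α) ^ (-(1:ℝ)/2) := by
    have hmap : ∫ ω, Real.exp (α * ξ ω ^ 2) ∂ℙ
        = ∫ x, Real.exp (α * x ^ 2) ∂(gaussianReal 0 1) := by
      rw [← hgauss, integral_map hξ.aemeasurable
        ((show Measurable fun x : ℝ => Real.exp (α * x ^ 2) by fun_prop).aestronglyMeasurable)]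
    rw [hmap, gauss_sq_integral hα]
  refine ⟨?_, hξint⟩
  rw [hξint]
  by_cases hint : Integrable (fun ω => Real.exp (α * Z ω ^ 2)) ℙ
  · set c := Real.sqrt (2 * α) with hc
    have hc2 : c ^ 2 = 2 * α := Real.sq_sqrt (by linarith)
    have hZint : ∀ lam : ℝ, Integrable (fun ω => Real.exp (lam * Z ω)) ℙ := by
      intro lam
      refine Integrable.mono' (hint.const_mul (Real.exp (lam ^ 2 / (4 * α))))
        ((show Measurable fun ω => Real.exp (lam * Z ω) by fun_prop).aestronglyMeasurable)
        (Filter.Eventually.of_forall fun ω => ?_)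
      rw [Real.norm_eq_abs, Real.abs_exp, ← Real.exp_add]
      refine Real.exp_le_exp.2 ?_
      have h4 : (0:ℝ) < 4 * α := by linarith
      have heq : lam ^ 2 / (4 * α) + α * Z ω ^ 2 - lam * Z ω
          = (lam - 2 * α * Z ω) ^ 2 / (4 * α) := by
        field_simp
        ring
      have hge := div_nonneg (sq_nonneg (lam - 2 * α * Z ω)) h4.le
      linarith
    have hpt : ∀ z : ℝ, Real.exp (α * z ^ 2) = ∫ t, Real.exp ((c * z) * t) ∂(gaussianReal 0 1) := by
      intro z
      rw [gauss_mgf]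
      congr 1
      rw [mul_pow, hc2]; ring
    have key : (∫⁻ ω, ENNReal.ofReal (Real.exp (α * Z ω ^ 2)) ∂ℙ)
        ≤ ENNReal.ofReal ((1 - 2 * α) ^ (-(1:ℝ)/2)) := by
      calc ∫⁻ ω, ENNReal.ofReal (Real.exp (α * Z ω ^ 2)) ∂ℙ
          = ∫⁻ ω, ∫⁻ t, ENNReal.ofReal (Real.exp ((c * Z ω) * t)) ∂(gaussianReal 0 1) ∂ℙ := by
            refine lintegral_congr fun ω => ?_
            rw [hpt (Z ω), ofReal_integral_eq_lintegral_ofReal (gauss_mgf_integrable _)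
              (Filter.Eventually.of_forall fun t => (Real.exp_pos _).le)]
        _ = ∫⁻ t, ∫⁻ ω, ENNReal.ofReal (Real.exp ((c * Z ω) * t)) ∂ℙ ∂(gaussianReal 0 1) :=
            lintegral_lintegral_swap (Measurable.aemeasurable
              (show Measurable fun p : Ω × ℝ =>
                  ENNReal.ofReal (Real.exp ((c * Z p.1) * p.2)) by fun_prop))
        _ ≤ ∫⁻ t, ENNReal.ofReal (Real.exp (α * t ^ 2)) ∂(gaussianReal 0 1) := by
            refine lintegral_mono fun t => ?_
            have hcomm : ∀ ω, (c * Z ω) * t = (c * t) * Z ω := fun ω => by ring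
            calc ∫⁻ ω, ENNReal.ofReal (Real.exp ((c * Z ω) * t)) ∂ℙ
                = ENNReal.ofReal (∫ ω, Real.exp ((c * t) * Z ω) ∂ℙ) := by
                  simp_rw [hcomm]
                  exact (ofReal_integral_eq_lintegral_ofReal (hZint (c * t))
                    (Filter.Eventually.of_forall fun ω => (Real.exp_pos _).le)).symm
              _ ≤ ENNReal.ofReal (Real.exp ((c * t) ^ 2 / 2)) :=
                  ENNReal.ofReal_le_ofReal (hsub (c * t))
              _ = ENNReal.ofReal (Real.exp (α * t ^ 2)) := by
                  rw [show (c * t) ^ 2 / 2 = α * t ^ 2 by rw [mul_pow, hc2]; ring]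
        _ = ENNReal.ofReal ((1 - 2 * α) ^ (-(1:ℝ)/2)) := by
            rw [← ofReal_integral_eq_lintegral_ofReal (gauss_sq_integrable hα)
              (Filter.Eventually.of_forall fun t => (Real.exp_pos _).le),
              gauss_sq_integral hα]
    have hofr := ofReal_integral_eq_lintegral_ofReal hint
      (Filter.Eventually.of_forall fun ω => (Real.exp_pos _).le)
    rw [← hofr] at key
    exact (ENNReal.ofReal_le_ofReal_iff (by positivity)).1 key
  · rw [integral_undef hint]
    positivity
end

section
/- Let r ∈ R^d, σ ≥ ‖r‖/√d with σ > 0, and let v = HDr where HD is orthogonal. Define Z_i = |v_i|/σ and levels ℓ_i = min{ℓ ≥ 0 : |v_i| ≤ σ 2^ℓ}. Then ∑_{i=1}^d Z_i² ≤ d and ∑_{i=1}^d (ℓ_i + 1) ≤ (2 + 1/(2 ln 2)) d. -/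
open Matrix Real

/-- Rate bound for the residual quantizer: with `v = M r` for orthogonal `M`,
`σ ≥ ‖r‖/√d`, `Z_i = |v_i|/σ` and levels `ℓ_i = min {ℓ : |v_i| ≤ σ 2^ℓ}`, one has
`∑ Z_i² ≤ d` and `∑ (ℓ_i + 1) ≤ (2 + 1/(2 ln 2)) d`. -/
theorem residual_rate_bound
    {d : ℕ} (hd : 0 < d) (r : Fin d → ℝ) (M : Matrix (Fin d) (Fin d) ℝ)
    (horth : Mᵀ * M = 1) (v : Fin d → ℝ) (hv : v = M.mulVec r)
    (σ : ℝ) (hσ : 0 < σ) (hσge : Real.sqrt (∑ i, r i ^ 2) / Real.sqrt d ≤ σ)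
    (ℓ : Fin d → ℕ)
    (hℓ : ∀ i, |v i| ≤ σ * 2 ^ (ℓ i) ∧ ∀ m : ℕ, m < ℓ i → ¬ (|v i| ≤ σ * 2 ^ m)) :
    (∑ i, (|v i| / σ) ^ 2 ≤ d) ∧
    (∑ i, ((ℓ i : ℝ) + 1) ≤ (2 + 1 / (2 * Real.log 2)) * d) := by
  -- norm preservation
  have hnorm : ∑ i, v i ^ 2 = ∑ i, r i ^ 2 := by
    subst hv
    have h1 : (M.mulVec r) ⬝ᵥ (M.mulVec r) = r ⬝ᵥ r := by
      rw [Matrix.dotProduct_mulVec, Matrix.vecMul_mulVec, horth]; simp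
    simpa [dotProduct, sq] using h1
  -- ∑ r² ≤ σ² d
  have hS : ∑ i, r i ^ 2 ≤ σ ^ 2 * d := by
    have hd' : (0:ℝ) < d := by exact_mod_cast hd
    have h1 : Real.sqrt (∑ i, r i ^ 2) ≤ σ * Real.sqrt d := by
      rw [div_le_iff₀ (Real.sqrt_pos.mpr hd')] at hσge
      linarith
    have h2 : Real.sqrt (∑ i, r i ^ 2) ^ 2 = ∑ i, r i ^ 2 :=
      Real.sq_sqrt (Finset.sum_nonneg fun i _ => sq_nonneg (r i))
    nlinarith [Real.sqrt_nonneg (∑ i, r i ^ 2), Real.sq_sqrt hd'.le,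
      Real.sqrt_nonneg (d:ℝ), mul_self_nonneg (σ * Real.sqrt d - Real.sqrt (∑ i, r i ^ 2))]
  have part1 : ∑ i, (|v i| / σ) ^ 2 ≤ d := by
    have : ∑ i, (|v i| / σ) ^ 2 = (∑ i, v i ^ 2) / σ ^ 2 := by
      rw [Finset.sum_div]
      congr 1; ext i; rw [div_pow, sq_abs]
    rw [this, hnorm, div_le_iff₀ (by positivity)]
    nlinarith
  refine ⟨part1, ?_⟩
  have hlog2 : 0 < Real.log 2 := Real.log_pos (by norm_num)
  have key : ∀ i, (ℓ i : ℝ) + 1 ≤ 2 + (|v i| / σ) ^ 2 / (2 * Real.log 2) := by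
    intro i
    rcases Nat.eq_zero_or_pos (ℓ i) with h0 | hpos
    · rw [h0]
      have : (0:ℝ) ≤ (|v i| / σ) ^ 2 / (2 * Real.log 2) := by positivity
      norm_num; linarith
    · obtain ⟨m, hm⟩ := Nat.exists_eq_succ_of_ne_zero hpos.ne'
      have hgt : σ * 2 ^ m < |v i| := by
        have := (hℓ i).2 m (by omega)
        linarith [not_le.mp this]
      set Z := |v i| / σ with hZ
      have hZgt : (2:ℝ) ^ m < Z := by
        rw [hZ, lt_div_iff₀ hσ]; linarith [hgt]
      have hZ1 : (1:ℝ) ≤ Z := le_trans (one_le_pow₀ (by norm_num : (1:ℝ) ≤ 2)) hZgt.le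
      have hlogZ : Real.log Z ≤ Z ^ 2 / 2 := by
        have := Real.log_le_sub_one_of_pos (by linarith : (0:ℝ) < Z)
        nlinarith
      have hmlog : (m:ℝ) * Real.log 2 < Real.log Z := by
        have := Real.log_lt_log (by positivity) hZgt
        rwa [Real.log_pow] at this
      have hm' : (m:ℝ) ≤ Z ^ 2 / (2 * Real.log 2) := by
        rw [le_div_iff₀ (by positivity)]
        nlinarith
      rw [hm]
      push_cast
      linarith
  calc ∑ i, ((ℓ i : ℝ) + 1) ≤ ∑ i, (2 + (|v i| / σ) ^ 2 / (2 * Real.log 2)) :=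
        Finset.sum_le_sum fun i _ => key i
    _ = 2 * d + (∑ i, (|v i| / σ) ^ 2) / (2 * Real.log 2) := by
        rw [Finset.sum_add_distrib, ← Finset.sum_div]
        simp [mul_comm]
    _ ≤ 2 * d + d / (2 * Real.log 2) := by
        gcongr
    _ = (2 + 1 / (2 * Real.log 2)) * d := by ring
end
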